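/- arXiv:2004.11323 — 2 statements merged into one kernel-verified Lean document; each statement's English description precedes it below -/
import Mathlib

section
/- For any Morse gauge $N$ there exists a Morse gauge $N'$, depending only on $N$, such that every subsegment (restriction to a subinterval) of an $N$-Morse geodesic is $N'$-Morse. -/
open Metric Set Filter

noncomputable section

/-- Gromov product of `x` and `y` with respect to `w`. -/
def gp {X : Type*} [MetricSpace X] (w x y : X) : ℝ :=
  (dist w x + dist w y - dist x y) / 2

/-- `X` is `δ`-hyperbolic in the Gromov-product sense. -/
def GromovHyp (X : Type*) [MetricSpace X] (δ : ℝ) : Prop :=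
  ∀ w x y z : X, min (gp w x z) (gp w z y) - δ ≤ gp w x y

/-- `γ` restricted to `s` is a (unit-speed) geodesic. -/
def IsGeodesicOn {X : Type*} [MetricSpace X] (γ : ℝ → X) (s : Set ℝ) : Prop :=
  ∀ a ∈ s, ∀ b ∈ s, dist (γ a) (γ b) = |a - b|

/-- `α` restricted to `s` is a `(K, C)`-quasi-geodesic. -/
def IsQGeodesicOn {X : Type*} [MetricSpace X] (K C : ℝ) (α : ℝ → X) (s : Set ℝ) : Prop :=
  ∀ a ∈ s, ∀ b ∈ s,
    K⁻¹ * |a - b| - C ≤ dist (α a) (α b) ∧ dist (α a) (α b) ≤ K * |a - b| + C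

/-- A Morse gauge, i.e. a function `[1,∞) × [0,∞) → [0,∞)` (extended to all of `ℝ²`). -/
abbrev MorseGauge : Type := ℝ → ℝ → ℝ

/-- `γ` (restricted to `s`) is an `N`-Morse geodesic: every `(K,C)`-quasi-geodesic with
endpoints on `γ` stays in the `N K C`-neighborhood of `γ`. -/
def IsMorseOn {X : Type*} [MetricSpace X] (N : MorseGauge) (γ : ℝ → X) (s : Set ℝ) : Prop :=
  ∀ K C : ℝ, 1 ≤ K → 0 ≤ C → ∀ a b : ℝ, a ≤ b → ∀ α : ℝ → X,
    IsQGeodesicOn K C α (Set.Icc a b) → α a ∈ γ '' s → α b ∈ γ '' s →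
    ∀ t ∈ Set.Icc a b, infDist (α t) (γ '' s) ≤ N K C

/-- `X` is a geodesic metric space. -/
def GeodesicSpace (X : Type*) [MetricSpace X] : Prop :=
  ∀ x y : X, ∃ γ : ℝ → X,
    γ 0 = x ∧ γ (dist x y) = y ∧ IsGeodesicOn γ (Set.Icc 0 (dist x y))

/-- `h` is a `(K, C)`-quasi-isometry. -/
def IsQI {X Y : Type*} [MetricSpace X] [MetricSpace Y] (K C : ℝ) (h : X → Y) : Prop :=
  (∀ x₁ x₂ : X,
      K⁻¹ * dist x₁ x₂ - C ≤ dist (h x₁) (h x₂) ∧ dist (h x₁) (h x₂) ≤ K * dist x₁ x₂ + C) ∧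
  ∀ y : Y, ∃ x : X, dist y (h x) ≤ C

/-! ### The sequential (Gromov) boundary -/

/-- The sequence `u` converges at infinity (with respect to basepoint `p`). -/
def ConvInf {X : Type*} [MetricSpace X] (p : X) (u : ℕ → X) : Prop :=
  Tendsto (fun nm : ℕ × ℕ => gp p (u nm.1) (u nm.2)) atTop atTop

/-- Two sequences converging at infinity are equivalent. -/
def SeqEquiv {X : Type*} [MetricSpace X] (p : X) (u v : ℕ → X) : Prop :=
  Tendsto (fun nm : ℕ × ℕ => gp p (u nm.1) (v nm.2)) atTop atTop

/-- `liminf` (as `n, m → ∞`) of the Gromov products of terms of two sequences. -/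
def pliminf {X : Type*} [MetricSpace X] (p : X) (u v : ℕ → X) : EReal :=
  Filter.liminf (fun nm : ℕ × ℕ => ((gp p (u nm.1) (v nm.2) : ℝ) : EReal)) atTop

def BSeq {X : Type*} [MetricSpace X] (p : X) : Type _ := {u : ℕ → X // ConvInf p u}

/-- The sequential boundary with respect to basepoint `p`. -/
def GBoundary {X : Type*} [MetricSpace X] (p : X) : Type _ :=
  Quot (fun u v : BSeq p => SeqEquiv p u.1 v.1)

def GBmk {X : Type*} [MetricSpace X] (p : X) (u : BSeq p) : GBoundary p := Quot.mk _ u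

/-- Gromov product of two boundary points: supremum over representative sequences
of the `liminf` of Gromov products. -/
def bprod {X : Type*} [MetricSpace X] (p : X) (x y : GBoundary p) : EReal :=
  sSup {t : EReal | ∃ u v : BSeq p, GBmk p u = x ∧ GBmk p v = y ∧ t = pliminf p u.1 v.1}

/-- Gromov product on `X ∪ ∂X`. -/
def eprod {X : Type*} [MetricSpace X] (p : X) :
    X ⊕ GBoundary p → X ⊕ GBoundary p → EReal
  | Sum.inl x, Sum.inl y => ((gp p x y : ℝ) : EReal)
  | Sum.inl x, Sum.inr b =>
      sSup {t : EReal | ∃ v : BSeq p, GBmk p v = b ∧ t = pliminf p (fun _ => x) v.1}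
  | Sum.inr a, Sum.inl y =>
      sSup {t : EReal | ∃ u : BSeq p, GBmk p u = a ∧ t = pliminf p u.1 (fun _ => y)}
  | Sum.inr a, Sum.inr b => bprod p a b

/-- `e^{-ε t}`, with the convention `e^{-ε ⋅ ∞} = 0`. -/
def expNeg (ε : ℝ) (t : EReal) : ℝ := if t = ⊤ then 0 else Real.exp (-ε * t.toReal)

/-- The chain (visual) metric `d_{p,ε}` on the boundary. -/
def visDist {X : Type*} [MetricSpace X] (p : X) (ε : ℝ) (x y : GBoundary p) : ℝ :=
  sInf {s : ℝ | ∃ (n : ℕ) (c : ℕ → GBoundary p), c 0 = x ∧ c n = y ∧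
    s = ∑ i ∈ Finset.range n, expNeg ε (bprod p (c i) (c (i + 1)))}

/-! ### Basepoint-free sequential boundary -/

def ConvInfF {X : Type*} [MetricSpace X] (u : ℕ → X) : Prop := ∀ p : X, ConvInf p u

def SeqEquivF {X : Type*} [MetricSpace X] (u v : ℕ → X) : Prop := ∀ p : X, SeqEquiv p u v

def BSeqF (X : Type*) [MetricSpace X] : Type _ := {u : ℕ → X // ConvInfF u}

def GBoundaryF (X : Type*) [MetricSpace X] : Type _ :=
  Quot (fun u v : BSeqF X => SeqEquivF u.1 v.1)

def GBFmk {X : Type*} [MetricSpace X] (u : BSeqF X) : GBoundaryF X := Quot.mk _ u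

def bprodF {X : Type*} [MetricSpace X] (p : X) (x y : GBoundaryF X) : EReal :=
  sSup {t : EReal | ∃ u v : BSeqF X, GBFmk u = x ∧ GBFmk v = y ∧ t = pliminf p u.1 v.1}

def visDistF {X : Type*} [MetricSpace X] (p : X) (ε : ℝ) (x y : GBoundaryF X) : ℝ :=
  sInf {s : ℝ | ∃ (n : ℕ) (c : ℕ → GBoundaryF X), c 0 = x ∧ c n = y ∧
    s = ∑ i ∈ Finset.range n, expNeg ε (bprodF p (c i) (c (i + 1)))}

/-! ### The Morse boundary -/

/-- A Morse geodesic ray. -/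
structure MorseRay (X : Type*) [MetricSpace X] where
  ray : ℝ → X
  geo : IsGeodesicOn ray (Set.Ici 0)
  morse : ∃ N : MorseGauge, IsMorseOn N ray (Set.Ici 0)

/-- Two subsets are at finite Hausdorff distance. -/
def AsympSets {X : Type*} [MetricSpace X] (A B : Set X) : Prop :=
  EMetric.hausdorffEdist A B ≠ ⊤

/-- The Morse boundary: Morse geodesic rays modulo finite Hausdorff distance. -/
def MorseBoundary (X : Type*) [MetricSpace X] : Type _ :=
  Quot (fun r r' : MorseRay X => AsympSets (r.ray '' Set.Ici 0) (r'.ray '' Set.Ici 0))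

def MBmk {X : Type*} [MetricSpace X] (r : MorseRay X) : MorseBoundary X := Quot.mk _ r

/-- `γ` (restricted to `[0,∞)`) is asymptotic to the Morse boundary point `p`. -/
def Asymp {X : Type*} [MetricSpace X] (γ : ℝ → X) (p : MorseBoundary X) : Prop :=
  ∃ r : MorseRay X, MBmk r = p ∧ AsympSets (γ '' Set.Ici 0) (r.ray '' Set.Ici 0)

/-- The bi-infinite geodesic `γ` joins the Morse boundary points `a` and `b`. -/
def Joins {X : Type*} [MetricSpace X] (γ : ℝ → X) (a b : MorseBoundary X) : Prop :=
  IsGeodesicOn γ Set.univ ∧ Asymp γ b ∧ Asymp (fun t => γ (-t)) a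

/-- `(a,b,c) ∈ ∂*X^{(3,N)}`: distinct points, all connecting geodesics `N`-Morse. -/
def Triple3 {X : Type*} [MetricSpace X] (N : MorseGauge) (a b c : MorseBoundary X) : Prop :=
  a ≠ b ∧ b ≠ c ∧ a ≠ c ∧
  (∀ γ : ℝ → X, Joins γ a b → IsMorseOn N γ Set.univ) ∧
  (∀ γ : ℝ → X, Joins γ b c → IsMorseOn N γ Set.univ) ∧
  (∀ γ : ℝ → X, Joins γ c a → IsMorseOn N γ Set.univ)

/-- `(p,q) ∈ ∂*X^{(2,N)}`: all connecting bi-infinite geodesics are `N`-Morse. -/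
def Pair2 {X : Type*} [MetricSpace X] (N : MorseGauge) (p q : MorseBoundary X) : Prop :=
  ∀ γ : ℝ → X, Joins γ p q → IsMorseOn N γ Set.univ

/-- `E_k(a,b,c)`: points within `k` of all three sides of some ideal triangle on `(a,b,c)`. -/
def Ek {X : Type*} [MetricSpace X] (k : ℝ) (a b c : MorseBoundary X) : Set X :=
  {x | ∃ γab γbc γca : ℝ → X, Joins γab a b ∧ Joins γbc b c ∧ Joins γca c a ∧
    infDist x (Set.range γab) ≤ k ∧ infDist x (Set.range γbc) ≤ k ∧
    infDist x (Set.range γca) ≤ k}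

/-- `K(a,b,c) = 1 + inf {k | E_k(a,b,c) ≠ ∅}`. -/
def Kconst {X : Type*} [MetricSpace X] (a b c : MorseBoundary X) : ℝ :=
  1 + sInf {k : ℝ | (Ek k a b c).Nonempty}

/-- The set of coarse centers of the ideal triangle on `(a,b,c)`. -/
def Ecen {X : Type*} [MetricSpace X] (a b c : MorseBoundary X) : Set X :=
  Ek (Kconst a b c) a b c

/-! ### Generalized triangles with vertices in `X ∪ ∂*X` -/

/-- Parameter domain of a side joining two (possibly ideal) vertices. -/
def sideDom {X : Type*} [MetricSpace X] :
    X ⊕ MorseBoundary X → X ⊕ MorseBoundary X → Set ℝ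
  | Sum.inl x, Sum.inl y => Set.Icc 0 (dist x y)
  | Sum.inl _, Sum.inr _ => Set.Ici 0
  | Sum.inr _, Sum.inl _ => Set.Ici 0
  | Sum.inr _, Sum.inr _ => Set.univ

/-- `γ` is a geodesic side joining the two (possibly ideal) vertices. -/
def SideJoins {X : Type*} [MetricSpace X] (γ : ℝ → X) :
    X ⊕ MorseBoundary X → X ⊕ MorseBoundary X → Prop
  | Sum.inl x, Sum.inl y =>
      IsGeodesicOn γ (Set.Icc 0 (dist x y)) ∧ γ 0 = x ∧ γ (dist x y) = y
  | Sum.inl x, Sum.inr b => IsGeodesicOn γ (Set.Ici 0) ∧ γ 0 = x ∧ Asymp γ b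
  | Sum.inr a, Sum.inl y => IsGeodesicOn γ (Set.Ici 0) ∧ γ 0 = y ∧ Asymp γ a
  | Sum.inr a, Sum.inr b => Joins γ a b

/-! ### Stability notions for boundary maps -/

/-- `f` is 2-stable. -/
def TwoStable {X Y : Type*} [MetricSpace X] [MetricSpace Y]
    (f : MorseBoundary X → MorseBoundary Y) : Prop :=
  ∀ N : MorseGauge, ∃ N' : MorseGauge, ∀ p q : MorseBoundary X,
    Pair2 N p q → Pair2 N' (f p) (f q)

/-- `p` belongs to `∂X_{x₀}^{(N)}`: some Morse ray from `x₀` represents `p`, and every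
geodesic ray from `x₀` representing `p` is `N`-Morse. -/
def InMB {X : Type*} [MetricSpace X] (x₀ : X) (N : MorseGauge) (p : MorseBoundary X) : Prop :=
  (∃ r : MorseRay X, MBmk r = p ∧ r.ray 0 = x₀) ∧
  ∀ r : MorseRay X, MBmk r = p → r.ray 0 = x₀ → IsMorseOn N r.ray (Set.Ici 0)

/-- `f` is `N₀`-basetriangle stable. -/
def BTStableAt {X Y : Type*} [MetricSpace X] [MetricSpace Y] (N₀ : MorseGauge)
    (f : MorseBoundary X → MorseBoundary Y) : Prop :=
  ∀ N : MorseGauge, ∃ N' : MorseGauge, ∀ a b c : MorseBoundary X, Triple3 N₀ a b c →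
    ∀ x₀ ∈ Ecen a b c, ∀ y₀ ∈ Ecen (f a) (f b) (f c),
      ∀ p : MorseBoundary X, InMB x₀ N p → InMB y₀ N' (f p)

/-- A group acts cocompactly by isometries on `X`. -/
def CocompactSpace' (X : Type*) [MetricSpace X] : Prop :=
  ∃ (G : Subgroup (X ≃ᵢ X)) (K : Set X), IsCompact K ∧ ∀ x : X, ∃ g ∈ G, g x ∈ K

/-- `F` is the boundary map induced by `h : X → Y`. -/
def IsInduced {X Y : Type*} [MetricSpace X] [MetricSpace Y] (h : X → Y)
    (F : MorseBoundary X → MorseBoundary Y) : Prop :=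
  ∀ (r : MorseRay X) (r' : MorseRay Y),
    AsympSets ((fun t => h (r.ray t)) '' Set.Ici 0) (r'.ray '' Set.Ici 0) →
    F (MBmk r) = MBmk r'

/-! ### The metric Morse boundaries `∂X_{x₀}^{(N)}` -/

/-- `X_{x₀}^{(N)}`: points all of whose geodesics to `x₀` are `N`-Morse. -/
def MSet {X : Type*} [MetricSpace X] (x₀ : X) (N : MorseGauge) : Set X :=
  {x | ∀ γ : ℝ → X, γ 0 = x₀ → γ (dist x₀ x) = x →
      IsGeodesicOn γ (Set.Icc 0 (dist x₀ x)) → IsMorseOn N γ (Set.Icc 0 (dist x₀ x))}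

/-- Sequences in `X_{x₀}^{(N)}` converging at infinity. -/
def MBSeq {X : Type*} [MetricSpace X] (x₀ : X) (N : MorseGauge) : Type _ :=
  {u : ℕ → X // (∀ n, u n ∈ MSet x₀ N) ∧ ConvInf x₀ u}

/-- The sequential boundary `∂X_{x₀}^{(N)}`. -/
def MBoundaryN {X : Type*} [MetricSpace X] (x₀ : X) (N : MorseGauge) : Type _ :=
  Quot (fun u v : MBSeq x₀ N => SeqEquiv x₀ u.1 v.1)

def MNmk {X : Type*} [MetricSpace X] (x₀ : X) (N : MorseGauge) (u : MBSeq x₀ N) :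
    MBoundaryN x₀ N := Quot.mk _ u

/-- The `N`-Gromov product `(x ⬝_N y)_{x₀}` on `∂X_{x₀}^{(N)}`. -/
def mprod {X : Type*} [MetricSpace X] (x₀ : X) (N : MorseGauge)
    (x y : MBoundaryN x₀ N) : EReal :=
  sSup {t : EReal | ∃ u v : MBSeq x₀ N,
    MNmk x₀ N u = x ∧ MNmk x₀ N v = y ∧ t = pliminf x₀ u.1 v.1}

/-- The visual metric `d_{x₀, ε_N}` on `∂X_{x₀}^{(N)}`. -/
def mvisDist {X : Type*} [MetricSpace X] (x₀ : X) (N : MorseGauge) (ε : ℝ)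
    (x y : MBoundaryN x₀ N) : ℝ :=
  sInf {s : ℝ | ∃ (n : ℕ) (c : ℕ → MBoundaryN x₀ N), c 0 = x ∧ c n = y ∧
    s = ∑ i ∈ Finset.range n, expNeg ε (mprod x₀ N (c i) (c (i + 1)))}

/-- The bi-infinite geodesic `γ` joins the points `a b ∈ ∂X_{x₀}^{(N)}`. -/
def MJoins {X : Type*} [MetricSpace X] (x₀ : X) (N : MorseGauge) (γ : ℝ → X)
    (a b : MBoundaryN x₀ N) : Prop :=
  IsGeodesicOn γ Set.univ ∧
  (∃ u : MBSeq x₀ N, MNmk x₀ N u = b ∧ SeqEquiv x₀ (fun n : ℕ => γ n) u.1) ∧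
  (∃ u : MBSeq x₀ N, MNmk x₀ N u = a ∧ SeqEquiv x₀ (fun n : ℕ => γ (-(n : ℝ))) u.1)

/-- `E_k(a,b,c)` for `a, b, c ∈ ∂X_{x₀}^{(N)}`. -/
def MEk {X : Type*} [MetricSpace X] (x₀ : X) (N : MorseGauge) (k : ℝ)
    (a b c : MBoundaryN x₀ N) : Set X :=
  {x | ∃ γab γbc γca : ℝ → X,
    MJoins x₀ N γab a b ∧ MJoins x₀ N γbc b c ∧ MJoins x₀ N γca c a ∧
    infDist x (Set.range γab) ≤ k ∧ infDist x (Set.range γbc) ≤ k ∧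
    infDist x (Set.range γca) ≤ k}

def MKconst {X : Type*} [MetricSpace X] (x₀ : X) (N : MorseGauge)
    (a b c : MBoundaryN x₀ N) : ℝ :=
  1 + sInf {k : ℝ | (MEk x₀ N k a b c).Nonempty}

/-- Coarse centers of a triangle with vertices in `∂X_{x₀}^{(N)}`. -/
def MEcen {X : Type*} [MetricSpace X] (x₀ : X) (N : MorseGauge)
    (a b c : MBoundaryN x₀ N) : Set X :=
  MEk x₀ N (MKconst x₀ N a b c) a b c

/-! ### Metric-space level regularity notions -/

/-- Quasisymmetric map with control function `ψ`. -/
def QSym {X Y : Type*} [MetricSpace X] [MetricSpace Y] (f : X → Y) (ψ : ℝ → ℝ) : Prop :=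
  ∀ a b c : X, a ≠ b → a ≠ c → b ≠ c →
    dist (f a) (f b) / dist (f a) (f c) ≤ ψ (dist a b / dist a c)

/-- Bihölder map: `C⁻¹ d(x,y)^{1/α₁} ≤ d'(f x, f y)^{α₂} ≤ C d(x,y)^{α₁}`. -/
def Biholder {X Y : Type*} [MetricSpace X] [MetricSpace Y] (f : X → Y)
    (C α₁ α₂ : ℝ) : Prop :=
  ∀ x y : X, C⁻¹ * dist x y ^ (1 / α₁) ≤ dist (f x) (f y) ^ α₂ ∧
    dist (f x) (f y) ^ α₂ ≤ C * dist x y ^ α₁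

/-- Strongly quasi-conformal map: every annulus `A(x, a, ar)` is mapped into some
annulus `A(f x, v, φ(r) v)`. -/
def SQConf {X Y : Type*} [MetricSpace X] [MetricSpace Y] (f : X → Y) (φ : ℝ → ℝ) : Prop :=
  ∀ (x : X) (a r : ℝ), 0 < a → 1 ≤ r → ∃ v : ℝ, 0 < v ∧
    ∀ p : X, a ≤ dist p x → dist p x ≤ a * r →
      v ≤ dist (f p) (f x) ∧ dist (f p) (f x) ≤ φ r * v

end


/-! A `(K, C)`-quasi-geodesic `α` with endpoints on `γ([c, d])` stays within `D = N(K, C) + 1`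
of points `γ(f(t))` with `f(t) ∈ s`. As `γ` is an isometric embedding of `s`, the shadow `f`
is a `(K, C + 2D)`-quasi-geodesic in `ℝ`, and a quasi-geodesic in `ℝ` overshoots the interval
between its endpoints by a bounded amount: if `f(t)` were far above both `f(a)` and `f(b)`, a
coarse intermediate value argument would give times `x ≤ t ≤ y` at which `f` takes nearly equal
values, although `f(t) - f(x)` and `f(t) - f(y)` force `y - x` to be large. As `f(a)` and `f(b)`
lie within `D` of `[c, d]`, so does `f(t)` up to that overshoot. -/

theorem coarse_intermediate_value_Icc {f : ℝ → ℝ} {a b v S : ℝ} (hab : a ≤ b)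
    (hf : ∀ p ∈ Icc a b, ∀ q ∈ Icc a b, |p - q| ≤ 1 → |f p - f q| ≤ S)
    (ha : f a ≤ v) (hb : v ≤ f b) : ∃ x ∈ Icc a b, v - S ≤ f x ∧ f x ≤ v := by
  obtain ⟨n, hn⟩ := exists_nat_ge (b - a)
  induction n generalizing b with
  | zero =>
    obtain rfl : b = a := by push_cast at hn; linarith
    have hb : b ∈ Icc b b := left_mem_Icc.2 hab
    have hS : 0 ≤ S := (abs_nonneg _).trans (hf b hb b hb (by simp))
    exact ⟨b, hb, by linarith, ha⟩
  | succ n ih =>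
    set b' := max a (b - 1)
    have hb' : b' ∈ Icc a b := ⟨le_max_left _ _, max_le hab (by linarith)⟩
    have hsub : Icc a b' ⊆ Icc a b := Icc_subset_Icc_right hb'.2
    by_cases hfb' : f b' ≤ v
    · have hstep : |b' - b| ≤ 1 :=
        abs_le.2 ⟨by linarith [le_max_right a (b - 1)], by linarith [hb'.2]⟩
      have := (abs_le.1 (hf b' hb' b (right_mem_Icc.2 hab) hstep)).1
      exact ⟨b', hb', by linarith, hfb'⟩
    · have hlen : b' - a ≤ n := by
        push_cast at hn
        exact sub_le_iff_le_add'.2 (max_le (le_add_of_nonneg_right n.cast_nonneg) (by linarith))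
      obtain ⟨x, hx, hfx⟩ :=
        ih hb'.1 (fun p hp q hq => hf p (hsub hp) q (hsub hq)) (le_of_not_ge hfb') hlen
      exact ⟨x, hsub hx, hfx⟩

/-- With the unit-step bound `S = K + C` of a `(K, C)`-quasi-geodesic, this is
`S + C + K ^ 2 * (2 * S + C)`. -/
def qgeodesicOvershoot (K C : ℝ) : ℝ := K + 2 * C + K ^ 2 * (2 * K + 3 * C)

theorem qgeodesicOvershoot_nonneg {K C : ℝ} (hK : 0 ≤ K) (hC : 0 ≤ C) :
    0 ≤ qgeodesicOvershoot K C := by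
  unfold qgeodesicOvershoot; positivity

namespace IsQGeodesicOn

variable {X : Type*} [MetricSpace X] {K C : ℝ} {s : Set ℝ}

theorem dist_le_of_abs_sub_le_one {α : ℝ → X} (h : IsQGeodesicOn K C α s) (hK : 0 ≤ K)
    {p q : ℝ} (hp : p ∈ s) (hq : q ∈ s) (hpq : |p - q| ≤ 1) :
    dist (α p) (α q) ≤ K + C :=
  (h p hp q hq).2.trans (by gcongr; exact mul_le_of_le_one_right hK hpq)

theorem of_dist_le {α β : ℝ → X} {D : ℝ} (h : IsQGeodesicOn K C α s)
    (hβ : ∀ r ∈ s, dist (α r) (β r) ≤ D) : IsQGeodesicOn K (C + 2 * D) β s := by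
  intro p hp q hq
  have hαβ := h p hp q hq
  have hp' := hβ p hp
  have hq' := hβ q hq
  have h₁ := dist_triangle4 (β p) (α p) (α q) (β q)
  have h₂ := dist_triangle4 (α p) (β p) (β q) (α q)
  constructor <;> linarith [dist_comm (α p) (β p), dist_comm (α q) (β q)]

theorem of_geodesic_comp {γ : ℝ → X} {f : ℝ → ℝ} {t : Set ℝ} (hγ : IsGeodesicOn γ t)
    (hf : MapsTo f s t) (h : IsQGeodesicOn K C (γ ∘ f) s) : IsQGeodesicOn K C f s := by
  intro p hp q hq
  rw [Real.dist_eq, ← hγ _ (hf hp) _ (hf hq)]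
  exact h p hp q hq

theorem neg {f : ℝ → ℝ} (h : IsQGeodesicOn K C f s) :
    IsQGeodesicOn K C (fun r => -f r) s := by
  simpa only [IsQGeodesicOn, dist_neg_neg] using h

section Overshoot

variable {f : ℝ → ℝ} {a b t : ℝ}

theorem le_max_add_overshoot (hK : 0 < K) (hC : 0 ≤ C) (h : IsQGeodesicOn K C f (Icc a b))
    (ht : t ∈ Icc a b) : f t ≤ max (f a) (f b) + qgeodesicOvershoot K C := by
  by_contra! hbig
  set M := max (f a) (f b)
  have hstep {g : ℝ → ℝ} (hg : IsQGeodesicOn K C g (Icc a b)) {u w : ℝ}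
      (huw : Icc u w ⊆ Icc a b) :
      ∀ p ∈ Icc u w, ∀ q ∈ Icc u w, |p - q| ≤ 1 → |g p - g q| ≤ K + C :=
    fun p hp q hq hpq => hg.dist_le_of_abs_sub_le_one hK.le (huw hp) (huw hq) hpq
  have hMt : M ≤ f t := by linarith [qgeodesicOvershoot_nonneg hK.le hC]
  obtain ⟨x, ⟨hax, hxt⟩, hx_lo, hx_hi⟩ := coarse_intermediate_value_Icc ht.1
    (hstep h (Icc_subset_Icc_right ht.2)) (le_max_left (f a) (f b)) hMt
  obtain ⟨y, ⟨hty, hyb⟩, hy_lo, hy_hi⟩ := coarse_intermediate_value_Icc ht.2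
    (hstep h.neg (Icc_subset_Icc_left ht.1)) (neg_le_neg hMt)
    (neg_le_neg (le_max_right (f a) (f b)))
  have hx : x ∈ Icc a b := ⟨hax, hxt.trans ht.2⟩
  have hy : y ∈ Icc a b := ⟨ht.1.trans hty, hyb⟩
  have hxy_close : K⁻¹ * (y - x) - C ≤ 2 * (K + C) := by
    have := (h y hy x hx).1
    rw [abs_of_nonneg (by linarith), Real.dist_eq, abs_of_nonneg (by linarith)] at this
    linarith
  have hxy_short : K * (y - x) ≤ K ^ 2 * (2 * (K + C) + C) := by
    have := mul_le_mul_of_nonneg_left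
      ((inv_mul_le_iff₀ hK).1 (by linarith : K⁻¹ * (y - x) ≤ 2 * (K + C) + C)) hK.le
    linarith
  have htx : f t - f x ≤ K * (t - x) + C := by
    have := (h t ht x hx).2
    rw [Real.dist_eq, abs_of_nonneg (sub_nonneg.2 hxt)] at this
    linarith [le_abs_self (f t - f x)]
  have hty' : f t - f y ≤ K * (y - t) + C := by
    have := (h t ht y hy).2
    rw [Real.dist_eq, abs_sub_comm t y, abs_of_nonneg (sub_nonneg.2 hty)] at this
    linarith [le_abs_self (f t - f y)]
  have : 0 ≤ K ^ 2 * (2 * K + 3 * C) := by positivity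
  unfold qgeodesicOvershoot at hbig
  linarith

theorem mem_Icc_min_sub_max_add (hK : 0 < K) (hC : 0 ≤ C) (h : IsQGeodesicOn K C f (Icc a b))
    (ht : t ∈ Icc a b) :
    f t ∈ Icc (min (f a) (f b) - qgeodesicOvershoot K C)
      (max (f a) (f b) + qgeodesicOvershoot K C) := by
  refine ⟨?_, h.le_max_add_overshoot hK hC ht⟩
  have := h.neg.le_max_add_overshoot hK hC ht
  rw [max_neg_neg] at this
  linarith

end Overshoot

end IsQGeodesicOn

theorem exists_mem_Icc_abs_sub_le {c d x E : ℝ} (hcd : c ≤ d) (hE : 0 ≤ E)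
    (hx : x ∈ Icc (c - E) (d + E)) : ∃ w ∈ Icc c d, |x - w| ≤ E := by
  refine ⟨max c (min d x), ⟨le_max_left _ _, max_le hcd (min_le_left _ _)⟩,
    abs_le.2 ⟨?_, ?_⟩⟩ <;>
  rcases max_cases c (min d x) with ⟨h₁, _⟩ | ⟨h₁, _⟩ <;>
  rcases min_cases d x with ⟨h₂, _⟩ | ⟨h₂, _⟩ <;> linarith [hx.1, hx.2]

theorem exists_forall_dist_le_of_infDist_lt {ι X : Type*} [MetricSpace X] {α : ι → X}
    {γ : ℝ → X} {s : Set ℝ} {I : Set ι} {N D : ℝ} (hs : s.Nonempty) (hND : N < D)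
    (h : ∀ r ∈ I, infDist (α r) (γ '' s) ≤ N) :
    ∃ f : ι → ℝ, MapsTo f I s ∧ ∀ r ∈ I, dist (α r) (γ (f r)) ≤ D := by
  have : ∀ r ∈ I, ∃ u ∈ s, dist (α r) (γ u) ≤ D := fun r hr => by
    obtain ⟨_, ⟨u, hu, rfl⟩, hd⟩ := (infDist_lt_iff (hs.image γ)).1 ((h r hr).trans_lt hND)
    exact ⟨u, hu, hd.le⟩
  choose! f hfs hfα using this
  exact ⟨f, hfs, hfα⟩

/-- any subsegment of an `N`-Morse geodesic is `N'`-Morse, with `N'`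
depending only on `N`. -/
theorem segment_of_morse_is_morse (N : MorseGauge) :
    ∃ N' : MorseGauge,
      ∀ (X : Type) [inst : MetricSpace X], GeodesicSpace X →
        ∀ (γ : ℝ → X) (s : Set ℝ), IsGeodesicOn γ s → IsMorseOn N γ s →
          ∀ c d : ℝ, Set.Icc c d ⊆ s → IsMorseOn N' γ (Set.Icc c d) := by
  refine ⟨fun K C => 2 * (N K C + 1) + qgeodesicOvershoot K (C + 2 * (N K C + 1)), ?_⟩
  intro X _ _ γ s hγ hM c d hcds K C hK hC a b hab α hα ⟨c₁, hc₁, hαa⟩ ⟨d₁, hd₁, hαb⟩ t ht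
  set D := N K C + 1
  set B := qgeodesicOvershoot K (C + 2 * D)
  have hnear := hM K C hK hC a b hab α hα ⟨c₁, hcds hc₁, hαa⟩ ⟨d₁, hcds hd₁, hαb⟩
  have hD : 0 ≤ D := by linarith [infDist_nonneg.trans (hnear a (left_mem_Icc.2 hab))]
  obtain ⟨f, hfs, hfα⟩ :=
    exists_forall_dist_le_of_infDist_lt ⟨c₁, hcds hc₁⟩ (lt_add_one _) hnear
  have hf : IsQGeodesicOn K (C + 2 * D) f (Icc a b) :=
    (hα.of_dist_le hfα).of_geodesic_comp hγ hfs
  have hend {r e : ℝ} (hr : r ∈ Icc a b) (he : e ∈ Icc c d) (hre : γ e = α r) :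
      f r ∈ Icc (c - D) (d + D) := by
    have := hfα r hr
    rw [← hre, hγ _ (hcds he) _ (hfs hr), abs_sub_comm, abs_le] at this
    exact ⟨by linarith [he.1], by linarith [he.2]⟩
  have hfa := hend (left_mem_Icc.2 hab) hc₁ hαa
  have hfb := hend (right_mem_Icc.2 hab) hd₁ hαb
  have hft := hf.mem_Icc_min_sub_max_add (by linarith) (by linarith) ht
  obtain ⟨w, hw, hfw⟩ := exists_mem_Icc_abs_sub_le (hc₁.1.trans hc₁.2)
    (add_nonneg hD (qgeodesicOvershoot_nonneg (by linarith) (by linarith)))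
    (⟨by linarith [le_min hfa.1 hfb.1, hft.1], by linarith [max_le hfa.2 hfb.2, hft.2]⟩ :
      f t ∈ Icc (c - (D + B)) (d + (D + B)))
  calc infDist (α t) (γ '' Icc c d)
      ≤ dist (α t) (γ w) := infDist_le_dist_of_mem (mem_image_of_mem γ hw)
    _ ≤ dist (α t) (γ (f t)) + dist (γ (f t)) (γ w) := dist_triangle _ _ _
    _ ≤ D + (D + B) := add_le_add (hfα t ht) (by rwa [hγ _ (hfs ht) _ (hcds hw)])
    _ = 2 * D + B := by ring
end

section
/- Let $f\colon(X_1,d_1)\to(X_2,d_2)$ be strongly quasi-conformal with function $\phi$, suppose $\operatorname{diam}(X_1)\leq1$, and let $a_1,b_1,a_2,b_2,c_2\in X_1$ with $d_1(a_2,c_2),d_1(b_2,c_2)\geq u$, $d_1(a_1,c_2),d_1(b_1,c_2)\geq u/3$, and $d_2(f(a_1),f(b_1))\geq u'>0$. Then $d_2(f(a_2),f(c_2))\geq u'/(2\phi(3/u))$ and $d_2(f(b_2),f(c_2))\geq u'/(2\phi(3/u))$. -/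
open Metric Set Filter

noncomputable section

section StronglyQuasiconformal

variable {X Y : Type*} [MetricSpace X] [MetricSpace Y] {f : X → Y} {φ : ℝ → ℝ}

/-- A point of `A(x, a, ar)` lands in `A(f x, v, φ(r) v)`, forcing `v ≤ φ(r) v`. -/
theorem SQConf.one_le_of_mem_annulus (hf : SQConf f φ) {x p : X} {a r : ℝ} (ha : 0 < a)
    (hr : 1 ≤ r) (hpa : a ≤ dist p x) (hpr : dist p x ≤ a * r) : 1 ≤ φ r := by
  obtain ⟨v, hv, hA⟩ := hf x a r ha hr
  obtain ⟨hlow, hupp⟩ := hA p hpa hpr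
  exact (le_mul_iff_one_le_left hv).1 (hlow.trans hupp)

/-- When the whole space lies in the ball of radius `a * r` about `x`, all points at
distance `≥ a` from `x` lie in `A(x, a, ar)`, so their images share one annulus
`A(f x, v, φ(r) v)`; the triangle inequality through `f x` does the rest. -/
theorem SQConf.dist_le_two_mul_mul_dist (hf : SQConf f φ) {x p q z : X} {a r : ℝ}
    (ha : 0 < a) (hr : 1 ≤ r) (hX : ∀ y : X, dist y x ≤ a * r)
    (hp : a ≤ dist p x) (hq : a ≤ dist q x) (hz : a ≤ dist z x) :
    dist (f p) (f q) ≤ 2 * φ r * dist (f z) (f x) := by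
  obtain ⟨v, -, hA⟩ := hf x a r ha hr
  have hφ : 1 ≤ φ r := hf.one_le_of_mem_annulus ha hr hp (hX p)
  have hpv := (hA p hp (hX p)).2
  have hqv := (hA q hq (hX q)).2
  calc dist (f p) (f q) ≤ dist (f p) (f x) + dist (f q) (f x) := dist_triangle_right _ _ _
    _ ≤ 2 * φ r * v := by linarith
    _ ≤ 2 * φ r * dist (f z) (f x) := by gcongr; exact (hA z hz (hX z)).1

end StronglyQuasiconformal

theorem strongly_quasiconformal_separation_general {X Y : Type*} [MetricSpace X] [MetricSpace Y]
    (f : X → Y) (φ : ℝ → ℝ) (hsqc : SQConf f φ)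
    (hdiam : ∀ p q : X, dist p q ≤ 1)
    (a₁ b₁ a₂ b₂ c₂ : X) (u u' : ℝ) (hu : 0 < u)
    (h₁ : u ≤ dist a₂ c₂) (h₂ : u ≤ dist b₂ c₂)
    (h₃ : u / 3 ≤ dist a₁ c₂) (h₄ : u / 3 ≤ dist b₁ c₂)
    (h₅ : u' ≤ dist (f a₁) (f b₁)) :
    u' / (2 * φ (3 / u)) ≤ dist (f a₂) (f c₂) ∧
      u' / (2 * φ (3 / u)) ≤ dist (f b₂) (f c₂) := by
  have hr : 1 ≤ 3 / u := by
    rw [le_div_iff₀ hu]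
    linarith [h₁.trans (hdiam a₂ c₂)]
  have hball : ∀ y : X, dist y c₂ ≤ u / 3 * (3 / u) := by
    rw [show u / 3 * (3 / u) = 1 by field_simp]
    exact fun y => hdiam y c₂
  have hφ : 0 < 2 * φ (3 / u) := by
    linarith [hsqc.one_le_of_mem_annulus (by positivity) hr h₃ (hball a₁)]
  have key : ∀ z : X, u ≤ dist z c₂ → u' / (2 * φ (3 / u)) ≤ dist (f z) (f c₂) := by
    intro z hz
    rw [div_le_iff₀' hφ]
    exact h₅.trans (hsqc.dist_le_two_mul_mul_dist (by positivity) hr hball h₃ h₄ (by linarith))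
  exact ⟨key a₂ h₁, key b₂ h₂⟩

/-- separation of image points under a strongly quasi-conformal map. -/
theorem strongly_quasiconformal_separation {X Y : Type*} [MetricSpace X] [MetricSpace Y]
    (f : X → Y) (φ : ℝ → ℝ) (hφ : ∀ r, 1 ≤ r → 1 ≤ φ r) (hsqc : SQConf f φ)
    (hdiam : ∀ p q : X, dist p q ≤ 1)
    (a₁ b₁ a₂ b₂ c₂ : X) (u u' : ℝ) (hu : 0 < u) (hu' : 0 < u')
    (h₁ : u ≤ dist a₂ c₂) (h₂ : u ≤ dist b₂ c₂)
    (h₃ : u / 3 ≤ dist a₁ c₂) (h₄ : u / 3 ≤ dist b₁ c₂)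
    (h₅ : u' ≤ dist (f a₁) (f b₁)) :
    u' / (2 * φ (3 / u)) ≤ dist (f a₂) (f c₂) ∧
      u' / (2 * φ (3 / u)) ≤ dist (f b₂) (f c₂) :=
  strongly_quasiconformal_separation_general f φ hsqc hdiam a₁ b₁ a₂ b₂ c₂ u u' hu h₁ h₂ h₃ h₄ h₅
end
end
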